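/- Suppose the sequence (T_n) satisfies hypotheses (NU1)–(NU4) of the nonstationary nonuniformly expanding setup with constants λ > 1 and K > 0. Then for every K_2 > (1 − λ^{-1})^{-1} K and K_1 = K + λ^{-1} K_2 (so 0 < K_1 < K_2, and K_1, K_2 can be chosen arbitrarily large), the following holds: for each k ≥ 1, each nonnegative measure μ on Y_k with |μ|_{LL,k} ≤ K_2, and each a ∈ P_k with a ⊆ Y_k, one has |(T_{k,k+τ_k(a)-1})_*(μ|_a)|_{LL,k+τ_k(a)} ≤ K_1. -/

import Mathlib

open MeasureTheory Set Filter
open scoped NNReal ENNReal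

noncomputable section

/-- `seqComp T k n = T (k+n-1) ∘ ⋯ ∘ T (k+1) ∘ T k`, i.e. the composition `T_{k,k+n-1}`. -/
def seqComp {α : Type*} (T : ℕ → α → α) (k : ℕ) : ℕ → α → α
  | 0 => id
  | n + 1 => fun x => T (k + n) (seqComp T k n x)

/-- First return time: `τ_k(x) = inf {n ≥ 1 : T_{k,k+n-1}(x) ∈ Y_{k+n}}`. -/
def retTime {α : Type*} (T : ℕ → α → α) (Y : ℕ → Set α) (k : ℕ) (x : α) : ℕ :=
  sInf {n | 1 ≤ n ∧ seqComp T k n x ∈ Y (k + n)}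

/-- `|μ|_{LL} ≤ c`: the measure `μ` has a density `ρ` with respect to `m` whose logarithm is
`c`-Lipschitz on `Y` (equivalently, `ρ y ≤ ρ y' · exp (c · d(y,y'))` for all `y, y' ∈ Y`, which
also correctly encodes the conventions `log 0 = -∞` and `log 0 - log 0 = 0`). -/
def LLBoundedBy {X : Type*} [MetricSpace X] [MeasurableSpace X]
    (m : Measure X) (Y : Set X) (μ : Measure X) (c : ℝ) : Prop :=
  ∃ ρ : X → ℝ, (∀ x, 0 ≤ ρ x) ∧ Measurable ρ ∧
    μ = m.withDensity (fun x => ENNReal.ofReal (ρ x)) ∧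
    ∀ y ∈ Y, ∀ y' ∈ Y, ρ y ≤ ρ y' * Real.exp (c * dist y y')

/-- Nonstationary nonuniformly expanding setup: hypotheses (NU1)–(NU4).
All data is indexed by `k ≥ 1`; the values at `k = 0` are irrelevant. -/
structure NUE (X : Type*) [MetricSpace X] [MeasurableSpace X] [BorelSpace X] where
  /-- the expansion constant `λ > 1` -/
  lam : ℝ
  /-- the distortion constant `K > 0` -/
  K : ℝ
  hlam : 1 < lam
  hK : 0 < K
  /-- `X` is a bounded metric space -/
  bounded : Bornology.IsBounded (univ : Set X)
  /-- the reference sets `Y k` -/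
  Y : ℕ → Set X
  Ymeas : ∀ k, MeasurableSet (Y k)
  /-- the reference probability measures `m k`, with `m k (Y k) = 1` -/
  m : ℕ → Measure X
  mprob : ∀ k, IsProbabilityMeasure (m k)
  mY : ∀ k, 1 ≤ k → m k (Y k) = 1
  /-- the maps `T k` -/
  T : ℕ → X → X
  Tmeas : ∀ k, Measurable (T k)
  /-- the partitions `P k` of `X` -/
  P : ℕ → Set (Set X)
  Pcount : ∀ k, (P k).Countable
  Pmeas : ∀ k, ∀ a ∈ P k, MeasurableSet a
  Pdisj : ∀ k, (P k).PairwiseDisjoint id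
  Pcover : ∀ k, 1 ≤ k → ⋃₀ P k = univ
  /-- `Y k` is `P k`-measurable -/
  PY : ∀ k, 1 ≤ k → ∃ S ⊆ P k, Y k = ⋃₀ S
  /-- the return times take values in `{1, 2, …}` (finite returns) -/
  retFin : ∀ k, 1 ≤ k → ∀ x : X, 1 ≤ retTime T Y k x ∧
    seqComp T k (retTime T Y k x) x ∈ Y (k + retTime T Y k x)
  /-- (NU1) -/
  nu1 : ∀ k, 1 ≤ k → ∀ a ∈ P k, a ⊆ Y k → 0 < m k a
  /-- (NU2) τ_k is constant on partition elements -/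
  nu2 : ∀ k, 1 ≤ k → ∀ a ∈ P k, ∀ x ∈ a, ∀ x' ∈ a, retTime T Y k x = retTime T Y k x'
  /-- (NU3) the first return maps are expanding bijections with log-Lipschitz Jacobians -/
  nu3 : ∀ k, 1 ≤ k → ∀ a ∈ P k, a ⊆ Y k → ∀ n, (∀ x ∈ a, retTime T Y k x = n) →
    Set.BijOn (seqComp T k n) a (Y (k + n)) ∧
    (∀ y ∈ a, ∀ y' ∈ a, lam * dist y y' ≤ dist (seqComp T k n y) (seqComp T k n y')) ∧
    LLBoundedBy (m (k + n)) (Y (k + n)) (Measure.map (seqComp T k n) ((m k).restrict a)) K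
  /-- (NU4) bounded backward expansion -/
  nu4 : ∀ k, 1 ≤ k → ∀ a ∈ P k, ∀ n, (∀ x ∈ a, retTime T Y k x = n) →
    ∀ x ∈ a, ∀ x' ∈ a, ∀ j ≤ n,
      dist (seqComp T k j x) (seqComp T k j x') ≤
        K * dist (seqComp T k n x) (seqComp T k n x')

namespace NUE

variable {X : Type*} [MetricSpace X] [MeasurableSpace X] [BorelSpace X]

/-- the return time `τ_k` -/
def tau (S : NUE X) : ℕ → X → ℕ := retTime S.T S.Y

/-- (NU5): `((T_{k,k+n-1})_* m_k)(Y_{k+n}) ≥ δ₀` for all `k ≥ 1` and `n ≥ n₀`. -/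
def nu5 (S : NUE X) (δ₀ : ℝ) (n₀ : ℕ) : Prop :=
  ∀ k, 1 ≤ k → ∀ n, n₀ ≤ n →
    ENNReal.ofReal δ₀ ≤ Measure.map (seqComp S.T k n) (S.m k) (S.Y (k + n))

/-- `μ` is regular with respect to `T_k, T_{k+1}, …` (with constant `K₁`). -/
def Regular (S : NUE X) (K₁ : ℝ) (k : ℕ) (μ : Measure X) : Prop :=
  ∀ l, 1 ≤ l →
    LLBoundedBy (S.m (k + l)) (S.Y (k + l))
      (Measure.map (seqComp S.T k l) (μ.restrict {x | S.tau k x = l})) K₁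

/-- `μ` has tail bound `r` with respect to `T_k, T_{k+1}, …`. -/
def TailBound (S : NUE X) (k : ℕ) (μ : Measure X) (r : ℕ → ℝ) : Prop :=
  ∀ n : ℕ, μ {x | n ≤ S.tau k x} ≤ ENNReal.ofReal (r n)

/-- the tail function `h^k(n) = m_k(τ_k ≥ n)`. -/
def hTail (S : NUE X) (k n : ℕ) : ℝ := (S.m k {x | n ≤ S.tau k x}).toReal

/-- `h_n^k(ℓ) = C_h (h^k(n+ℓ) + h^{k+1}(n+ℓ-1) + ⋯ + h^{k+n}(ℓ))`. -/
def hnk (S : NUE X) (Ch : ℝ) (k n l : ℕ) : ℝ :=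
  Ch * ∑ i ∈ Finset.range (n + 1), S.hTail (k + i) (n + l - i)

end NUE

/-!
The density of `(F_a)_*(μ|_a)` with respect to `m_{k+τ}` is `ζ · (ρ ∘ F_a⁻¹)`, where `ζ` is the
Jacobian of `F_a` and `ρ` the density of `μ`. Log-Lipschitz constants add under products, and
`F_a⁻¹` contracts distances by `λ⁻¹`, so the pushforward has constant at most `K + λ⁻¹ K₂ = K₁`;
the lower bound on `K₂` is exactly what makes `K₁ < K₂`.
-/

open Function

lemma measurable_seqComp {α : Type*} [MeasurableSpace α] {T : ℕ → α → α}
    (hT : ∀ i, Measurable (T i)) (k n : ℕ) : Measurable (seqComp T k n) := by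
  induction n with
  | zero => exact measurable_id
  | succ n ih => exact (hT _).comp ih

lemma pos_and_add_inv_mul_lt {lam K K₂ : ℝ} (hlam : 1 < lam) (hK : 0 < K)
    (hK₂ : (1 - lam⁻¹)⁻¹ * K < K₂) : 0 < K₂ ∧ K + lam⁻¹ * K₂ < K₂ := by
  have hgap : 0 < 1 - lam⁻¹ := sub_pos.2 (inv_lt_one_of_one_lt₀ hlam)
  rw [inv_mul_lt_iff₀ hgap] at hK₂
  have hK₂pos : 0 < K₂ := pos_of_mul_pos_right (hK.trans hK₂) hgap.le
  exact ⟨hK₂pos, by linarith⟩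

section Measures

variable {α β : Type*} [MeasurableSpace α] [MeasurableSpace β]

lemma map_withDensity_comp (μ : Measure α) {f : α → β} {g : β → ℝ≥0∞}
    (hf : Measurable f) (hg : Measurable g) :
    (μ.withDensity (g ∘ f)).map f = (μ.map f).withDensity g := by
  ext s hs
  rw [Measure.map_apply hf hs, withDensity_apply _ hs, withDensity_apply _ (hf hs),
    setLIntegral_map hs hg hf, comp_def]

lemma map_restrict_withDensity_of_leftInvOn (m : Measure α) {f : α → ℝ≥0∞} {F : α → β}
    {G : β → α} {a : Set α} (hf : Measurable f) (hF : Measurable F) (hG : Measurable G)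
    (ha : MeasurableSet a) (hGF : LeftInvOn G F a) :
    ((m.withDensity f).restrict a).map F = ((m.restrict a).map F).withDensity (f ∘ G) := by
  rw [restrict_withDensity ha, ← map_withDensity_comp _ hF (hf.comp hG)]
  congr 1
  refine withDensity_congr_ae ?_
  filter_upwards [ae_restrict_mem ha] with x hx
  simp only [comp_apply, hGF hx]

end Measures

lemma Set.BijOn.lipschitzOnWith_invFunOn {α β : Type*} [PseudoMetricSpace α]
    [PseudoMetricSpace β] [Nonempty α] {f : α → β} {s : Set α} {t : Set β} {L : ℝ≥0}
    (h : BijOn f s t) (hf : ∀ x ∈ s, ∀ x' ∈ s, dist x x' ≤ L * dist (f x) (f x')) :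
    LipschitzOnWith L (invFunOn f s) t := by
  refine LipschitzOnWith.of_dist_le_mul fun y hy y' hy' => ?_
  have hinv := h.invOn_invFunOn.2
  simpa only [hinv hy, hinv hy'] using
    hf _ (h.surjOn.mapsTo_invFunOn hy) _ (h.surjOn.mapsTo_invFunOn hy')

lemma mul_le_mul_mul_exp_add {a a' b b' s t : ℝ} (hb : 0 ≤ b) (ha' : 0 ≤ a')
    (hab : a ≤ a' * Real.exp s) (hbb : b ≤ b' * Real.exp t) :
    a * b ≤ a' * b' * Real.exp (s + t) :=
  calc a * b ≤ (a' * Real.exp s) * (b' * Real.exp t) :=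
        mul_le_mul hab hbb hb (by positivity)
    _ = a' * b' * Real.exp (s + t) := by rw [Real.exp_add]; ring

theorem LLBoundedBy.map_restrict_of_bijOn {X : Type*} [MetricSpace X] [MeasurableSpace X]
    [BorelSpace X] [Nonempty X] {m m' μ : Measure X} {Y Y' a : Set X} {F : X → X}
    {c₁ c₂ : ℝ} {L : ℝ≥0} (hμ : LLBoundedBy m Y μ c₂) (hF : Measurable F)
    (ha : MeasurableSet a) (hY' : MeasurableSet Y') (hbij : BijOn F a Y')
    (hexp : ∀ x ∈ a, ∀ x' ∈ a, dist x x' ≤ L * dist (F x) (F x')) (haY : a ⊆ Y)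
    (hc₂ : 0 ≤ c₂) (hζ : LLBoundedBy m' Y' ((m.restrict a).map F) c₁) :
    LLBoundedBy m' Y' ((μ.restrict a).map F) (c₁ + L * c₂) := by
  classical
  obtain ⟨ρ, hρ0, hρm, rfl, hρ⟩ := hμ
  obtain ⟨ζ, hζ0, hζm, hζeq, hζ⟩ := hζ
  have hlip := hbij.lipschitzOnWith_invFunOn hexp
  -- `id` off `Y'` only serves to make the inverse a globally measurable map.
  set G := Y'.piecewise (invFunOn F a) id
  have hGm : Measurable G := hlip.continuousOn.measurable_piecewise continuousOn_id hY'
  have hGF : LeftInvOn G F a := fun x hx => by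
    simp only [G, piecewise_eq_of_mem _ _ _ (hbij.mapsTo hx), hbij.injOn.leftInvOn_invFunOn hx]
  have hGY : ∀ y ∈ Y', G y = invFunOn F a y := fun y hy => piecewise_eq_of_mem _ _ _ hy
  refine ⟨fun y => ζ y * ρ (G y), fun y => mul_nonneg (hζ0 y) (hρ0 _), hζm.mul (hρm.comp hGm),
    ?_, fun y hy y' hy' => ?_⟩
  · rw [map_restrict_withDensity_of_leftInvOn m hρm.ennreal_ofReal hF hGm ha hGF, hζeq,
      ← withDensity_mul _ hζm.ennreal_ofReal (hρm.ennreal_ofReal.comp hGm)]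
    congr 1
    funext y
    exact (ENNReal.ofReal_mul (hζ0 y)).symm
  · have hmem : ∀ z ∈ Y', G z ∈ Y := fun z hz =>
      haY (hGY z hz ▸ hbij.surjOn.mapsTo_invFunOn hz)
    have hdist : dist (G y) (G y') ≤ L * dist y y' := by
      rw [hGY y hy, hGY y' hy']
      exact hlip.dist_le_mul y hy y' hy'
    have hρG : ρ (G y) ≤ ρ (G y') * Real.exp (L * c₂ * dist y y') :=
      (hρ _ (hmem y hy) _ (hmem y' hy')).trans <| mul_le_mul_of_nonneg_left
        (Real.exp_le_exp.2 (by rw [mul_comm (L : ℝ), mul_assoc]; gcongr)) (hρ0 _)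
    have := mul_le_mul_mul_exp_add (hρ0 _) (hζ0 _) (hζ y hy y' hy') hρG
    rwa [← add_mul] at this

theorem stmt3 {X : Type*} [MetricSpace X] [MeasurableSpace X] [BorelSpace X]
    (S : NUE X) (K₂ : ℝ) (hK₂ : (1 - S.lam⁻¹)⁻¹ * S.K < K₂)
    (K₁ : ℝ) (hK₁ : K₁ = S.K + S.lam⁻¹ * K₂) :
    0 < K₁ ∧ K₁ < K₂ ∧
    ∀ k, 1 ≤ k → ∀ μ : Measure X, LLBoundedBy (S.m k) (S.Y k) μ K₂ →
      ∀ a ∈ S.P k, a ⊆ S.Y k → ∀ n, (∀ x ∈ a, S.tau k x = n) →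
        LLBoundedBy (S.m (k + n)) (S.Y (k + n))
          (Measure.map (seqComp S.T k n) (μ.restrict a)) K₁ := by
  have hlam : 0 < S.lam := zero_lt_one.trans S.hlam
  obtain ⟨hK₂pos, hK₁K₂⟩ := pos_and_add_inv_mul_lt S.hlam S.hK hK₂
  subst hK₁
  refine ⟨add_pos S.hK (mul_pos (inv_pos.2 hlam) hK₂pos), hK₁K₂, ?_⟩
  intro k hk μ hμ a ha haY n hn
  obtain ⟨hbij, hexp, hζ⟩ := S.nu3 k hk a ha haY n hn
  obtain ⟨x, -⟩ := nonempty_of_measure_ne_zero (S.nu1 k hk a ha haY).ne'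
  have : Nonempty X := ⟨x⟩
  exact hμ.map_restrict_of_bijOn (L := ⟨S.lam⁻¹, inv_nonneg.2 hlam.le⟩)
    (measurable_seqComp S.Tmeas k n) (S.Pmeas k a ha) (S.Ymeas _) hbij
    (fun x hx x' hx' => (le_inv_mul_iff₀ hlam).2 (hexp x hx x' hx')) haY hK₂pos.le hζ
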